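/- Let θ₀, θ_R ∈ S_{2π} and z ∈ ℂ \ σ(H_{θ₀,θ_R}). Then the generalized Dirichlet-to-Neumann map Λ_{θ₀,θ_R}(z) satisfies: (i) its diagonal entries are (Λ_{θ₀,θ_R}(z))_{1,1} = (−sin(θ₀) + cos(θ₀)u'_{+,θ_R}(z,0))/(cos(θ₀) + sin(θ₀)u'_{+,θ_R}(z,0)) and (Λ_{θ₀,θ_R}(z))_{2,2} = (−sin(θ_R) − cos(θ_R)u'_{−,θ₀}(z,R))/(cos(θ_R) − sin(θ_R)u'_{−,θ₀}(z,R)); (ii) its off-diagonal entries are equal: (Λ_{θ₀,θ_R}(z))_{1,2} = (Λ_{θ₀,θ_R}(z))_{2,1}, and both equal (−sin(θ₀)u_{−,θ₀}(z,0) + cos(θ₀)u'_{−,θ₀}(z,0))/(cos(θ_R) − sin(θ_R)u'_{−,θ₀}(z,R)) as well as (−sin(θ_R)u_{+,θ_R}(z,R) − cos(θ_R)u'_{+,θ_R}(z,R))/(cos(θ₀) + sin(θ₀)u'_{+,θ_R}(z,0)). -/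

import Mathlib

open MeasureTheory Set Complex Filter Matrix
open scoped Classical

noncomputable section

/-- The strip `S_{2π} = {z ∈ ℂ | 0 ≤ Re z < 2π}`. -/
def S2pi : Set ℂ := {z : ℂ | 0 ≤ z.re ∧ z.re < 2 * Real.pi}

/-- `u` (with derivative `u'`) solves the inhomogeneous Schrödinger equation
`-u'' + V u - z u = f` on `[0,R]`: `u` is differentiable with derivative `u'`
on `[0,R]`, and `u'` is absolutely continuous with `u'' = (V - z) u - f` (a.e.),
encoded in integrated form. -/
def IsSolInhom (R : ℝ) (V : ℝ → ℂ) (z : ℂ) (f u u' : ℝ → ℂ) : Prop :=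
  (∀ x ∈ Icc (0:ℝ) R, HasDerivAt u (u' x) x) ∧
  (∀ x ∈ Icc (0:ℝ) R, u' x = u' 0 + ∫ t in (0:ℝ)..x, ((V t - z) * u t - f t))

/-- `u` (with derivative `u'`) solves the homogeneous equation `-u'' + V u = z u`
on `[0,R]`. -/
def IsSol (R : ℝ) (V : ℝ → ℂ) (z : ℂ) (u u' : ℝ → ℂ) : Prop :=
  IsSolInhom R V z 0 u u'

/-- The boundary trace map `γ_{θ₀,θ_R}(u) ∈ ℂ²`. -/
def bTrace (R : ℝ) (θ0 θR : ℂ) (u u' : ℝ → ℂ) : Fin 2 → ℂ :=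
  ![Complex.cos θ0 * u 0 + Complex.sin θ0 * u' 0,
    Complex.cos θR * u R - Complex.sin θR * u' R]

/-- `z` is an eigenvalue of the Schrödinger operator `H_{θ₀,θ_R}` in `L²((0,R))`.
Since `H_{θ₀,θ_R}` has purely discrete spectrum, the spectrum `σ(H_{θ₀,θ_R})`
coincides with the set of its eigenvalues. -/
def IsEigenvalue (R : ℝ) (V : ℝ → ℂ) (θ0 θR z : ℂ) : Prop :=
  ∃ u u' : ℝ → ℂ, IsSol R V z u u' ∧ bTrace R θ0 θR u u' = 0 ∧
    ∃ x ∈ Icc (0:ℝ) R, u x ≠ 0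

/-- The boundary data map `Λ_{θ₀,θ_R}^{θ₀',θ_R'}(z) : ℂ² → ℂ²`: it sends the
`(θ₀,θ_R)`-boundary data of a solution of `-u'' + V u = z u` to its
`(θ₀',θ_R')`-boundary data.  (It is defined via a choice of solution; for
`z ∉ σ(H_{θ₀,θ_R})` the solution exists and is unique, so the map is well
defined there.) -/
def lambdaMap (R : ℝ) (V : ℝ → ℂ) (θ0 θR θ0' θR' z : ℂ) (c : Fin 2 → ℂ) :
    Fin 2 → ℂ :=
  if h : ∃ u : (ℝ → ℂ) × (ℝ → ℂ), IsSol R V z u.1 u.2 ∧ bTrace R θ0 θR u.1 u.2 = c then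
    bTrace R θ0' θR' h.choose.1 h.choose.2
  else 0

/-- The boundary data map `Λ_{θ₀,θ_R}^{θ₀',θ_R'}(z)` as a `2 × 2` complex matrix. -/
def lambdaMat (R : ℝ) (V : ℝ → ℂ) (θ0 θR θ0' θR' z : ℂ) :
    Matrix (Fin 2) (Fin 2) ℂ :=
  Matrix.of fun i j => lambdaMap R V θ0 θR θ0' θR' z (Pi.single j 1) i

/-- The diagonal matrix `S_{α,β} = diag(sin α, sin β)`. -/
def Smat (α β : ℂ) : Matrix (Fin 2) (Fin 2) ℂ :=
  Matrix.diagonal ![Complex.sin α, Complex.sin β]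

end

noncomputable section

/-- The generalized Dirichlet-to-Neumann map
`Λ_{θ₀,θ_R}(z) = Λ_{θ₀,θ_R}^{θ₀',θ_R'}(z)` with `θ₀' = (θ₀ + π/2) mod 2π` and
`θ_R' = (θ_R + π/2) mod 2π`.  (Since `cos` and `sin` are `2π`-periodic, the
boundary trace map, and hence the boundary data map, is unchanged by reduction
mod `2π`, so we may simply use `θ₀ + π/2`, `θ_R + π/2`.) -/
def lambdaDMat (R : ℝ) (V : ℝ → ℂ) (θ0 θR z : ℂ) : Matrix (Fin 2) (Fin 2) ℂ :=
  lambdaMat R V θ0 θR (θ0 + (Real.pi : ℂ) / 2) (θR + (Real.pi : ℂ) / 2) z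

end

/-! Rescaling `u₊` and `u₋` by their (nonzero) `(θ₀, θ_R)`-boundary traces produces the solutions
with boundary data `e₁` and `e₂`; a vanishing trace would make `u₊` or `u₋` an eigenfunction, and
since `z` is not an eigenvalue a solution is determined on `[0, R]` by its boundary data, so the
choice made in `lambdaMap` is irrelevant. The columns of `Λ_{θ₀,θ_R}(z)` are then the
`(θ₀ + π/2, θ_R + π/2)`-traces of these two solutions. The two expressions for the off-diagonal
entries agree because the Wronskian `u₊ u₋' - u₊' u₋` is constant: it is absolutely continuous
and, by the equation, has derivative zero almost everywhere. -/

theorem Isometry.comp_absolutelyContinuousOnInterval {X Y : Type*} [PseudoMetricSpace X]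
    [PseudoMetricSpace Y] {g : X → Y} (hg : Isometry g) {f : ℝ → X} {a b : ℝ}
    (hf : AbsolutelyContinuousOnInterval f a b) :
    AbsolutelyContinuousOnInterval (g ∘ f) a b := by
  simpa only [AbsolutelyContinuousOnInterval, Function.comp_apply, hg.dist_eq] using hf

theorem AbsolutelyContinuousOnInterval.congr {X : Type*} [PseudoMetricSpace X] {f g : ℝ → X}
    {a b : ℝ} (hf : AbsolutelyContinuousOnInterval f a b) (hfg : EqOn f g (uIcc a b)) :
    AbsolutelyContinuousOnInterval g a b := by
  refine hf.congr' (eventually_inf_principal.2 (Eventually.of_forall fun E hE => ?_))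
  refine Finset.sum_congr rfl fun i hi => ?_
  rw [hfg (hE.1 i hi).1, hfg (hE.1 i hi).2]

theorem IntervalIntegrable.absolutelyContinuousOnInterval_intervalIntegral_complex
    {f : ℝ → ℂ} {a b c : ℝ} (h : IntervalIntegrable f volume a b) (hc : c ∈ uIcc a b) :
    AbsolutelyContinuousOnInterval (fun x ↦ ∫ t in c..x, f t) a b := by
  have hre : IntervalIntegrable (fun t ↦ (f t).re) volume a b := ⟨h.1.re, h.2.re⟩
  have him : IntervalIntegrable (fun t ↦ (f t).im) volume a b := ⟨h.1.im, h.2.im⟩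
  have hac_re := isometry_ofReal.comp_absolutelyContinuousOnInterval
    (hre.absolutelyContinuousOnInterval_intervalIntegral hc)
  have hac_im := isometry_ofReal.comp_absolutelyContinuousOnInterval
    (him.absolutelyContinuousOnInterval_intervalIntegral hc)
  refine (hac_re.add (hac_im.const_smul I)).congr fun x hx => ?_
  have hcx : IntervalIntegrable f volume c x := h.mono_set (uIcc_subset_uIcc hc hx)
  simp only [Pi.add_apply, Function.comp_apply, smul_eq_mul]
  rw [← re_add_im (∫ t in c..x, f t), ← RCLike.re_to_complex, ← RCLike.im_to_complex,
    ← intervalIntegral.intervalIntegral_re hcx, ← intervalIntegral.intervalIntegral_im hcx,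
    mul_comm]
  rfl

theorem AbsolutelyContinuousOnInterval.of_eq_add_integral {f g : ℝ → ℂ} {a b : ℝ}
    (hg : IntervalIntegrable g volume a b) (hf : ∀ x ∈ uIcc a b, f x = f a + ∫ t in a..x, g t) :
    AbsolutelyContinuousOnInterval f a b :=
  ((LipschitzWith.const (f a)).lipschitzOnWith.absolutelyContinuousOnInterval.add
    (hg.absolutelyContinuousOnInterval_intervalIntegral_complex left_mem_uIcc)).congr
    fun x hx => (hf x hx).symm

theorem bTrace_smul (R : ℝ) (θ0 θR c : ℂ) (u u' : ℝ → ℂ) :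
    bTrace R θ0 θR (c • u) (c • u') = c • bTrace R θ0 θR u u' := by
  ext i
  fin_cases i <;> simp [bTrace] <;> ring

theorem bTrace_sub (R : ℝ) (θ0 θR : ℂ) (u u' v v' : ℝ → ℂ) :
    bTrace R θ0 θR (u - v) (u' - v') = bTrace R θ0 θR u u' - bTrace R θ0 θR v v' := by
  ext i
  fin_cases i <;> simp [bTrace] <;> ring

theorem bTrace_add_pi_div_two (R : ℝ) (θ0 θR : ℂ) (u u' : ℝ → ℂ) :
    bTrace R (θ0 + Real.pi / 2) (θR + Real.pi / 2) u u' =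
      ![-sin θ0 * u 0 + cos θ0 * u' 0, -sin θR * u R - cos θR * u' R] := by
  simp only [bTrace, cos_add_pi_div_two, sin_add_pi_div_two, neg_mul]

theorem bTrace_congr {R : ℝ} (hR : 0 ≤ R) (θ0 θR : ℂ) {u u' v v' : ℝ → ℂ}
    (h : EqOn u v (Icc 0 R)) (h' : EqOn u' v' (Icc 0 R)) :
    bTrace R θ0 θR u u' = bTrace R θ0 θR v v' := by
  have h0 := left_mem_Icc.2 hR
  have hRmem := right_mem_Icc.2 hR
  simp only [bTrace, h h0, h' h0, h hRmem, h' hRmem]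

def wronskian (u u' v v' : ℝ → ℂ) (x : ℝ) : ℂ := u x * v' x - u' x * v x

namespace IsSol

variable {R : ℝ} {V : ℝ → ℂ} {z : ℂ} {u u' v v' : ℝ → ℂ}

theorem deriv_eq_add_integral (hu : IsSol R V z u u') {x : ℝ} (hx : x ∈ Icc 0 R) :
    u' x = u' 0 + ∫ t in (0 : ℝ)..x, (V t - z) * u t := by
  simpa using hu.2 x hx

theorem continuousOn (hu : IsSol R V z u u') : ContinuousOn u (Icc 0 R) :=
  fun x hx => (hu.1 x hx).continuousAt.continuousWithinAt

theorem intervalIntegrable_potential_mul (hu : IsSol R V z u u') (hV : IntegrableOn V (Ioo 0 R))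
    (hR : 0 ≤ R) : IntervalIntegrable (fun t => (V t - z) * u t) volume 0 R := by
  have hVz : IntegrableOn (fun t => V t - z) (Icc 0 R) :=
    (integrableOn_Icc_iff_integrableOn_Ioo).2 (hV.sub (integrableOn_const measure_Ioo_lt_top.ne))
  refine IntegrableOn.intervalIntegrable ?_
  rw [uIcc_of_le hR]
  exact hVz.mul_continuousOn hu.continuousOn isCompact_Icc

theorem absolutelyContinuousOnInterval_deriv (hu : IsSol R V z u u')
    (hV : IntegrableOn V (Ioo 0 R)) (hR : 0 ≤ R) : AbsolutelyContinuousOnInterval u' 0 R :=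
  .of_eq_add_integral (hu.intervalIntegrable_potential_mul hV hR) fun x hx =>
    hu.deriv_eq_add_integral (by rwa [uIcc_of_le hR] at hx)

theorem continuousOn_deriv (hu : IsSol R V z u u') (hV : IntegrableOn V (Ioo 0 R))
    (hR : 0 ≤ R) : ContinuousOn u' (Icc 0 R) := by
  simpa only [uIcc_of_le hR] using (hu.absolutelyContinuousOnInterval_deriv hV hR).continuousOn

theorem absolutelyContinuousOnInterval (hu : IsSol R V z u u') (hV : IntegrableOn V (Ioo 0 R))
    (hR : 0 ≤ R) : AbsolutelyContinuousOnInterval u 0 R := by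
  refine .of_eq_add_integral ((hu.continuousOn_deriv hV hR).intervalIntegrable_of_Icc hR)
    fun x hx => ?_
  rw [uIcc_of_le hR] at hx
  have hsub : uIcc 0 x ⊆ Icc 0 R := by
    rw [uIcc_of_le hx.1]
    exact Icc_subset_Icc_right hx.2
  rw [intervalIntegral.integral_eq_sub_of_hasDerivAt (fun y hy => hu.1 y (hsub hy))
    ((hu.continuousOn_deriv hV hR).mono hsub).intervalIntegrable, add_sub_cancel]

theorem ae_hasDerivAt_deriv (hu : IsSol R V z u u') (hV : IntegrableOn V (Ioo 0 R))
    (hR : 0 ≤ R) : ∀ᵐ x, x ∈ Icc 0 R → HasDerivAt u' ((V x - z) * u x) x := by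
  filter_upwards [(hu.intervalIntegrable_potential_mul hV hR).ae_hasDerivAt_integral,
    (Ioo_ae_eq_Icc (μ := volume) (a := (0 : ℝ)) (b := R)).mem_iff] with x hprim hIoo hx
  have hx' : x ∈ Ioo 0 R := hIoo.2 hx
  refine ((hprim (Icc_subset_uIcc hx) 0 left_mem_uIcc).const_add (u' 0)).congr_of_eventuallyEq ?_
  filter_upwards [Icc_mem_nhds hx'.1 hx'.2] with y hy using hu.deriv_eq_add_integral hy

theorem wronskian_eq (hu : IsSol R V z u u') (hv : IsSol R V z v v')
    (hV : IntegrableOn V (Ioo 0 R)) (hR : 0 ≤ R) :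
    wronskian u u' v v' R = wronskian u u' v v' 0 := by
  have hac : AbsolutelyContinuousOnInterval (wronskian u u' v v') 0 R :=
    ((hu.absolutelyContinuousOnInterval hV hR).fun_smul
      (hv.absolutelyContinuousOnInterval_deriv hV hR)).sub
      ((hu.absolutelyContinuousOnInterval_deriv hV hR).fun_smul
      (hv.absolutelyContinuousOnInterval hV hR))
  have hderiv : ∀ᵐ x, x ∈ uIcc 0 R → HasDerivAt (wronskian u u' v v') 0 x := by
    filter_upwards [hu.ae_hasDerivAt_deriv hV hR, hv.ae_hasDerivAt_deriv hV hR] with x hu'' hv'' hx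
    rw [uIcc_of_le hR] at hx
    exact (((hu.1 x hx).mul (hv'' hx)).sub ((hu'' hx).mul (hv.1 x hx))).congr_deriv (by ring)
  obtain ⟨C, hC⟩ := hac.const_of_ae_hasDerivAt_zero hderiv
  rw [hC R right_mem_uIcc, hC 0 left_mem_uIcc]

theorem smul (hu : IsSol R V z u u') (c : ℂ) : IsSol R V z (c • u) (c • u') := by
  refine ⟨fun x hx => (hu.1 x hx).const_smul c, fun x hx => ?_⟩
  simp only [Pi.smul_apply, smul_eq_mul, Pi.zero_apply, sub_zero, mul_left_comm _ c,
    intervalIntegral.integral_const_mul, hu.deriv_eq_add_integral hx, mul_add]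

theorem sub (hu : IsSol R V z u u') (hv : IsSol R V z v v') (hV : IntegrableOn V (Ioo 0 R))
    (hR : 0 ≤ R) : IsSol R V z (u - v) (u' - v') := by
  refine ⟨fun x hx => (hu.1 x hx).sub (hv.1 x hx), fun x hx => ?_⟩
  have hsub : uIcc 0 x ⊆ uIcc 0 R := uIcc_subset_uIcc left_mem_uIcc (Icc_subset_uIcc hx)
  simp only [Pi.sub_apply, Pi.zero_apply, sub_zero, mul_sub,
    intervalIntegral.integral_sub ((hu.intervalIntegrable_potential_mul hV hR).mono_set hsub)
      ((hv.intervalIntegrable_potential_mul hV hR).mono_set hsub),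
    hu.deriv_eq_add_integral hx, hv.deriv_eq_add_integral hx]
  ring

theorem eqOn_zero_of_bTrace_eq_zero {θ0 θR : ℂ} (hz : ¬IsEigenvalue R V θ0 θR z)
    (hu : IsSol R V z u u') (hb : bTrace R θ0 θR u u' = 0) : EqOn u 0 (Icc 0 R) :=
  fun x hx => by_contra fun h => hz ⟨u, u', hu, hb, x, hx, h⟩

theorem eqOn_deriv_zero_of_eqOn_zero (hu : IsSol R V z u u') (hR : 0 < R)
    (h0 : EqOn u 0 (Icc 0 R)) : EqOn u' 0 (Icc 0 R) := by
  have hconst : ∀ x ∈ Icc 0 R, u' x = u' 0 := fun x hx => by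
    rw [hu.deriv_eq_add_integral hx, add_eq_left]
    refine (intervalIntegral.integral_congr fun t ht => ?_).trans intervalIntegral.integral_zero
    rw [uIcc_of_le hx.1] at ht
    simp [h0 (Icc_subset_Icc_right hx.2 ht)]
  have hmid : R / 2 ∈ Ioo 0 R := ⟨by linarith, by linarith⟩
  have hu'mid : u' (R / 2) = 0 :=
    (hu.1 _ (Ioo_subset_Icc_self hmid)).unique ((hasDerivAt_const _ 0).congr_of_eventuallyEq
      (eventuallyEq_of_mem (Icc_mem_nhds hmid.1 hmid.2) h0))
  intro x hx
  rw [hconst x hx, ← hconst _ (Ioo_subset_Icc_self hmid), hu'mid, Pi.zero_apply]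

end IsSol

section BoundaryDataMap

variable {R : ℝ} {V : ℝ → ℂ} {θ0 θR z : ℂ} {u u' : ℝ → ℂ}

theorem lambdaMap_bTrace (hR : 0 < R) (hV : IntegrableOn V (Ioo 0 R))
    (hz : ¬IsEigenvalue R V θ0 θR z) (hu : IsSol R V z u u') (θ0' θR' : ℂ) :
    lambdaMap R V θ0 θR θ0' θR' z (bTrace R θ0 θR u u') = bTrace R θ0' θR' u u' := by
  have hex : ∃ p : (ℝ → ℂ) × (ℝ → ℂ),
      IsSol R V z p.1 p.2 ∧ bTrace R θ0 θR p.1 p.2 = bTrace R θ0 θR u u' := ⟨(u, u'), hu, rfl⟩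
  rw [lambdaMap, dif_pos hex]
  obtain ⟨hp, hpb⟩ := hex.choose_spec
  have hdiff := hp.sub hu hV hR.le
  have hzero := hdiff.eqOn_zero_of_bTrace_eq_zero hz (by rw [bTrace_sub, hpb, sub_self])
  exact bTrace_congr hR.le θ0' θR' (fun x hx => sub_eq_zero.1 (hzero hx))
    fun x hx => sub_eq_zero.1 (hdiff.eqOn_deriv_zero_of_eqOn_zero hR hzero hx)

theorem lambdaMat_apply_eq_div (hR : 0 < R) (hV : IntegrableOn V (Ioo 0 R))
    (hz : ¬IsEigenvalue R V θ0 θR z) (hu : IsSol R V z u u') {j : Fin 2} {c : ℂ} (hc : c ≠ 0)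
    (hb : bTrace R θ0 θR u u' = c • Pi.single j 1) (θ0' θR' : ℂ) (i : Fin 2) :
    lambdaMat R V θ0 θR θ0' θR' z i j = bTrace R θ0' θR' u u' i / c := by
  have hb' : bTrace R θ0 θR (c⁻¹ • u) (c⁻¹ • u') = Pi.single j 1 := by
    rw [bTrace_smul, hb, smul_smul, inv_mul_cancel₀ hc, one_smul]
  rw [lambdaMat, of_apply, ← hb', lambdaMap_bTrace hR hV hz (hu.smul c⁻¹), bTrace_smul,
    Pi.smul_apply, smul_eq_mul, inv_mul_eq_div]

end BoundaryDataMap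

theorem dirichlet_to_neumann_entries_general
    (R : ℝ) (hR : 0 < R) (V : ℝ → ℂ) (hV : IntegrableOn V (Ioo 0 R))
    (θ0 θR : ℂ)
    (z : ℂ) (hz : ¬ IsEigenvalue R V θ0 θR z)
    (up up' um um' : ℝ → ℂ)
    (hup : IsSol R V z up up') (hup0 : up 0 = 1)
    (hupR : Complex.cos θR * up R - Complex.sin θR * up' R = 0)
    (hum : IsSol R V z um um') (humR : um R = 1)
    (hum0 : Complex.cos θ0 * um 0 + Complex.sin θ0 * um' 0 = 0) :
    lambdaDMat R V θ0 θR z 0 0 =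
      (-Complex.sin θ0 + Complex.cos θ0 * up' 0) /
        (Complex.cos θ0 + Complex.sin θ0 * up' 0) ∧
    lambdaDMat R V θ0 θR z 1 1 =
      (-Complex.sin θR - Complex.cos θR * um' R) /
        (Complex.cos θR - Complex.sin θR * um' R) ∧
    lambdaDMat R V θ0 θR z 0 1 = lambdaDMat R V θ0 θR z 1 0 ∧
    lambdaDMat R V θ0 θR z 0 1 =
      (-Complex.sin θ0 * um 0 + Complex.cos θ0 * um' 0) /
        (Complex.cos θR - Complex.sin θR * um' R) ∧
    lambdaDMat R V θ0 θR z 0 1 =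
      (-Complex.sin θR * up R - Complex.cos θR * up' R) /
        (Complex.cos θ0 + Complex.sin θ0 * up' 0) := by
  set c0 := cos θ0 + sin θ0 * up' 0
  set cR := cos θR - sin θR * um' R
  have hbp : bTrace R θ0 θR up up' = c0 • Pi.single 0 1 := by
    ext i; fin_cases i <;> simp [bTrace, hup0, hupR, c0]
  have hbm : bTrace R θ0 θR um um' = cR • Pi.single 1 1 := by
    ext i; fin_cases i <;> simp [bTrace, humR, hum0, cR]
  have hc0 : c0 ≠ 0 := fun h => one_ne_zero <| hup0 ▸
    hup.eqOn_zero_of_bTrace_eq_zero hz (by rw [hbp, h, zero_smul]) (left_mem_Icc.2 hR.le)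
  have hcR : cR ≠ 0 := fun h => one_ne_zero <| humR ▸
    hum.eqOn_zero_of_bTrace_eq_zero hz (by rw [hbm, h, zero_smul]) (right_mem_Icc.2 hR.le)
  have hW := hup.wronskian_eq hum hV hR.le
  simp only [wronskian, hup0, humR] at hW
  have hsym :
      (-sin θ0 * um 0 + cos θ0 * um' 0) / cR = (-sin θR * up R - cos θR * up' R) / c0 := by
    rw [div_eq_div_iff hcR hc0]
    -- the two cross products are the Wronskian of `u₊, u₋` at `0` and at `R`
    linear_combination (up' 0 * cos θ0 - sin θ0) * hum0 + (sin θR + um' R * cos θR) * hupR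
      + (um' 0 - um 0 * up' 0) * sin_sq_add_cos_sq θ0
      - (up R * um' R - up' R) * sin_sq_add_cos_sq θR - hW
  simp only [lambdaDMat, lambdaMat_apply_eq_div hR hV hz hup hc0 hbp,
    lambdaMat_apply_eq_div hR hV hz hum hcR hbm, bTrace_add_pi_div_two]
  simpa [hup0, humR] using hsym

/-- Entries of the generalized Dirichlet-to-Neumann map
`Λ_{θ₀,θ_R}(z)` in terms of the distinguished basis `u₊ = u_{+,θ_R}(z,·)`,
`u₋ = u_{−,θ₀}(z,·)`: the diagonal entries are the displayed quotients, and the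
two off-diagonal entries coincide and are given by either of the two displayed
quotients. -/
theorem dirichlet_to_neumann_entries
    (R : ℝ) (hR : 0 < R) (V : ℝ → ℂ) (hV : IntegrableOn V (Ioo 0 R))
    (θ0 θR : ℂ) (hθ0 : θ0 ∈ S2pi) (hθR : θR ∈ S2pi)
    (z : ℂ) (hz : ¬ IsEigenvalue R V θ0 θR z)
    (up up' um um' : ℝ → ℂ)
    (hup : IsSol R V z up up') (hup0 : up 0 = 1)
    (hupR : Complex.cos θR * up R - Complex.sin θR * up' R = 0)
    (hum : IsSol R V z um um') (humR : um R = 1)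
    (hum0 : Complex.cos θ0 * um 0 + Complex.sin θ0 * um' 0 = 0) :
    lambdaDMat R V θ0 θR z 0 0 =
      (-Complex.sin θ0 + Complex.cos θ0 * up' 0) /
        (Complex.cos θ0 + Complex.sin θ0 * up' 0) ∧
    lambdaDMat R V θ0 θR z 1 1 =
      (-Complex.sin θR - Complex.cos θR * um' R) /
        (Complex.cos θR - Complex.sin θR * um' R) ∧
    lambdaDMat R V θ0 θR z 0 1 = lambdaDMat R V θ0 θR z 1 0 ∧
    lambdaDMat R V θ0 θR z 0 1 =
      (-Complex.sin θ0 * um 0 + Complex.cos θ0 * um' 0) /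
        (Complex.cos θR - Complex.sin θR * um' R) ∧
    lambdaDMat R V θ0 θR z 0 1 =
      (-Complex.sin θR * up R - Complex.cos θR * up' R) /
        (Complex.cos θ0 + Complex.sin θ0 * up' 0) :=
  dirichlet_to_neumann_entries_general R hR V hV θ0 θR z hz up up' um um' hup hup0 hupR hum humR
    hum0
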